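/- Let d be symmetric nonnegative with the α-relaxed triangle inequality (α ≥ 1), f monotone submodular nonnegative with f(∅) = 0, λ ≥ 0, and φ(X) = f(X) + λ·d(X), φ'(X) = (1/2)f(X) + λ·d(X). Suppose a sequence ∅ = G_0 ⊂ G_1 ⊂ ⋯ ⊂ G_p with |G_i| = i satisfies the greedy property: for each i < p, the element u_{i+1} ∈ G_{i+1} \ G_i maximizes φ'(G_i ∪ {u}) − φ'(G_i) over all u ∉ G_i. Then for any set O with |O| = p, φ(G_p) ≥ (1/(2α))·φ(O). -/

import Mathlib

/-!
Write `p = |O|`, `G_i` for the greedy set of size `i < p` and `C = O \ G_i`, which is nonempty.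
The greedy gain of `φ'` at step `i` is at least its average gain over `C`. By submodularity the
`f`-part of that average is at least `(f O - f G_p) / (2p)`. For the dispersion part, split `O`
and `G_i` along `O \ G_i`, `O ∩ G_i`, `G_i \ O` and bound every pair of a block through each point
of another block by the relaxed triangle inequality: this gives
`|C| · i · d(O) ≤ α p (p - 1) · d(C, G_i)`, so the dispersion part is at least
`λ i d(O) / (α p (p - 1))`. Summing over `i < p` telescopes to
`φ'(G_p) ≥ (f O - f G_p) / 2 + λ d(O) / (2α)`, which rearranges to the claim since `α ≥ 1`.
-/

open Finset

noncomputable def dSet {U : Type*} (d : U → U → ℝ) (X : Finset U) : ℝ :=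
  (∑ u ∈ X, ∑ v ∈ X, d u v) / 2

noncomputable def dCross {U : Type*} (d : U → U → ℝ) (X Y : Finset U) : ℝ :=
  ∑ u ∈ X, ∑ v ∈ Y, d u v

section

variable {U : Type*}

section Dispersion

variable (d : U → U → ℝ)

lemma dSet_empty : dSet d ∅ = 0 := by
  simp [dSet]

lemma dSet_eq_zero_of_card_le_one (hself : ∀ u, d u u = 0) {X : Finset U} (hX : X.card ≤ 1) :
    dSet d X = 0 := by
  rw [card_le_one] at hX
  rw [dSet, sum_eq_zero fun x hx => sum_eq_zero fun y hy => hX x hx y hy ▸ hself x, zero_div]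

lemma dCross_nonneg (hnn : ∀ u v, 0 ≤ d u v) (X Y : Finset U) : 0 ≤ dCross d X Y :=
  sum_nonneg fun _ _ => sum_nonneg fun _ _ => hnn _ _

lemma dCross_comm (hsymm : ∀ u v, d u v = d v u) (X Y : Finset U) :
    dCross d X Y = dCross d Y X := by
  rw [dCross, dCross, sum_comm]
  exact sum_congr rfl fun _ _ => sum_congr rfl fun _ _ => hsymm _ _

lemma dCross_union_right [DecidableEq U] {Y Z : Finset U} (h : Disjoint Y Z) (X : Finset U) :
    dCross d X (Y ∪ Z) = dCross d X Y + dCross d X Z := by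
  simp only [dCross, sum_union h, sum_add_distrib]

lemma dSet_union [DecidableEq U] (hsymm : ∀ u v, d u v = d v u) {X Y : Finset U}
    (h : Disjoint X Y) : dSet d (X ∪ Y) = dSet d X + dSet d Y + dCross d X Y := by
  have hYX := dCross_comm d hsymm Y X
  simp only [dSet, dCross, sum_union h, sum_add_distrib] at hYX ⊢
  linarith

lemma dSet_insert [DecidableEq U] (hsymm : ∀ u v, d u v = d v u) (hself : ∀ u, d u u = 0)
    {v : U} {S : Finset U} (hv : v ∉ S) :
    dSet d (insert v S) = dSet d S + ∑ w ∈ S, d v w := by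
  rw [insert_eq, dSet_union d hsymm (disjoint_singleton_left.2 hv)]
  simp [dSet, dCross, hself]

variable {α : ℝ}

/-- Each pair `x ≠ y` of `C` is bounded through `g` by the relaxed triangle inequality; the
diagonal is excluded, whence the factor `|C| - 1`. -/
lemma dSet_le_mul_sum_dist [DecidableEq U] (hsymm : ∀ u v, d u v = d v u)
    (hself : ∀ u, d u u = 0) (htri : ∀ u v w, d u v ≤ α * (d v w + d w u)) (C : Finset U) (g : U) :
    dSet d C ≤ α * (C.card - 1) * ∑ y ∈ C, d y g := by
  have hrow : ∀ x ∈ C,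
      ∑ y ∈ C, d x y ≤ α * (∑ y ∈ C, d y g - d x g) + α * (C.card - 1) * d x g := by
    intro x hx
    have hcard : ((C.erase x).card : ℝ) = C.card - 1 := by
      rw [card_erase_of_mem hx, Nat.cast_pred (card_pos.2 ⟨x, hx⟩)]
    calc ∑ y ∈ C, d x y = ∑ y ∈ C.erase x, d x y := (sum_erase C (hself x)).symm
      _ ≤ ∑ y ∈ C.erase x, α * (d y g + d g x) := sum_le_sum fun y _ => htri x y g
      _ = α * (∑ y ∈ C, d y g - d x g) + α * (C.card - 1) * d x g := by
        rw [← mul_sum, sum_add_distrib, sum_erase_eq_sub hx, sum_const, nsmul_eq_mul, hcard,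
          hsymm g x]
        ring
  calc dSet d C ≤ (∑ x ∈ C, (α * (∑ y ∈ C, d y g - d x g) + α * (C.card - 1) * d x g)) / 2 :=
        div_le_div_of_nonneg_right (sum_le_sum hrow) zero_le_two
    _ = α * (C.card - 1) * ∑ y ∈ C, d y g := by
        rw [sum_add_distrib, ← mul_sum, ← mul_sum, sum_sub_distrib, sum_const, nsmul_eq_mul]
        ring

lemma card_mul_dSet_le_dCross [DecidableEq U] (hsymm : ∀ u v, d u v = d v u)
    (hself : ∀ u, d u u = 0) (htri : ∀ u v w, d u v ≤ α * (d v w + d w u)) (C S : Finset U) :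
    S.card * dSet d C ≤ α * (C.card - 1) * dCross d C S :=
  calc S.card * dSet d C = ∑ _g ∈ S, dSet d C := by rw [sum_const, nsmul_eq_mul]
    _ ≤ ∑ g ∈ S, α * (C.card - 1) * ∑ y ∈ C, d y g :=
        sum_le_sum fun g _ => dSet_le_mul_sum_dist d hsymm hself htri C g
    _ = α * (C.card - 1) * dCross d C S := by rw [← mul_sum, dCross, sum_comm]

/-- The arithmetic behind `card_sdiff_mul_card_mul_dSet_le`, for `c = |O \ S|`, `k = |O ∩ S|`,
`e = |S \ O|`: it is the sum of the three bounds weighted by `c + k`, `c - e` and `e + k`. -/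
lemma dispersion_split_arith {c k e sC sK X Y : ℝ} (hα : 1 ≤ α) (hc : 0 ≤ c) (hk : 0 ≤ k)
    (hec : e ≤ c) (hek : 0 ≤ e + k) (hX : 0 ≤ X) (hY : 0 ≤ Y)
    (hCE : e * sC ≤ α * (c - 1) * Y) (hCK : k * sC ≤ α * (c - 1) * X)
    (hKC : c * sK ≤ α * (k - 1) * X) :
    c * (e + k) * (sC + sK + X) ≤ α * (c + k) * (c + k - 1) * (Y + X) := by
  have h1 := mul_le_mul_of_nonneg_left hCE (add_nonneg hc hk)
  have h2 := mul_le_mul_of_nonneg_left hCK (sub_nonneg.2 hec)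
  have h3 := mul_le_mul_of_nonneg_left hKC hek
  have h4 : 0 ≤ (α - 1) * (c * (e + k) * X) :=
    mul_nonneg (sub_nonneg.2 hα) (mul_nonneg (mul_nonneg hc hek) hX)
  have h5 : 0 ≤ α * (c + k) * k * Y := by positivity
  have h6 : 0 ≤ α * k * (c - e) * X :=
    mul_nonneg (mul_nonneg (mul_nonneg (by linarith) hk) (sub_nonneg.2 hec)) hX
  linarith

lemma card_sdiff_mul_card_mul_dSet_le [DecidableEq U] (hα : 1 ≤ α) (hnn : ∀ u v, 0 ≤ d u v)
    (hsymm : ∀ u v, d u v = d v u) (hself : ∀ u, d u u = 0)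
    (htri : ∀ u v w, d u v ≤ α * (d v w + d w u)) {S O : Finset U} (hSO : S.card ≤ O.card) :
    ((O \ S).card : ℝ) * S.card * dSet d O ≤ α * O.card * (O.card - 1) * dCross d (O \ S) S := by
  have hO : (O \ S) ∪ (O ∩ S) = O := sdiff_union_inter O S
  have hS : (S \ O) ∪ (O ∩ S) = S := by rw [inter_comm]; exact sdiff_union_inter S O
  have hcardO : ((O \ S).card : ℝ) + (O ∩ S).card = O.card := by
    exact_mod_cast card_sdiff_add_card_inter O S
  have hcardS : ((S \ O).card : ℝ) + (O ∩ S).card = S.card := by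
    rw [inter_comm]; exact_mod_cast card_sdiff_add_card_inter S O
  have hdO : dSet d O = dSet d (O \ S) + dSet d (O ∩ S) + dCross d (O \ S) (O ∩ S) := by
    conv_lhs => rw [← hO]
    exact dSet_union d hsymm (disjoint_sdiff_inter O S)
  have hdS : dCross d (O \ S) S = dCross d (O \ S) (S \ O) + dCross d (O \ S) (O ∩ S) := by
    have hdisj : Disjoint (S \ O) (O ∩ S) := by rw [inter_comm]; exact disjoint_sdiff_inter S O
    rw [← dCross_union_right d hdisj, hS]
  rw [← hcardO, ← hcardS, hdO, hdS]
  refine dispersion_split_arith hα (Nat.cast_nonneg _) (Nat.cast_nonneg _) ?_ (by positivity)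
    (dCross_nonneg d hnn _ _) (dCross_nonneg d hnn _ _)
    (card_mul_dSet_le_dCross d hsymm hself htri _ _) (card_mul_dSet_le_dCross d hsymm hself htri _ _)
    ?_
  · have : ((S.card : ℕ) : ℝ) ≤ O.card := by exact_mod_cast hSO
    linarith
  · rw [← dCross_comm d hsymm]
    exact card_mul_dSet_le_dCross d hsymm hself htri _ _

end Dispersion

lemma sub_le_sum_marginal [DecidableEq U] (f : Finset U → ℝ)
    (hsub : ∀ X Y, f (X ∪ Y) + f (X ∩ Y) ≤ f X + f Y) (S C : Finset U) :
    f (S ∪ C) - f S ≤ ∑ v ∈ C, (f (insert v S) - f S) := by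
  induction C using Finset.induction_on with
  | empty => simp
  | insert a C ha ih =>
    have h := hsub (S ∪ C) (insert a S)
    have hunion : S ∪ C ∪ insert a S = S ∪ insert a C := by
      ext x; simp only [mem_union, mem_insert]; tauto
    have hinter : (S ∪ C) ∩ insert a S = S := by
      ext x; simp only [mem_inter, mem_union, mem_insert]
      constructor
      · rintro ⟨hS | hC, rfl | hS'⟩ <;> first | assumption | exact absurd hC ha
      · exact fun hS => ⟨Or.inl hS, Or.inr hS⟩
    rw [hunion, hinter] at h
    rw [sum_insert ha]
    linarith

noncomputable def greedyObjective (f : Finset U → ℝ) (d : U → U → ℝ) (lam : ℝ)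
    (X : Finset U) : ℝ :=
  (1 / 2) * f X + lam * dSet d X

lemma greedy_gain_ge [DecidableEq U] {d : U → U → ℝ} {α : ℝ} {f : Finset U → ℝ} {lam : ℝ}
    (hα : 1 ≤ α) (hnn : ∀ u v, 0 ≤ d u v) (hsymm : ∀ u v, d u v = d v u)
    (hself : ∀ u, d u u = 0) (htri : ∀ u v w, d u v ≤ α * (d v w + d w u))
    (hmono : ∀ X Y, X ⊆ Y → f X ≤ f Y) (hsub : ∀ X Y, f (X ∪ Y) + f (X ∩ Y) ≤ f X + f Y)
    (hlam : 0 ≤ lam) {S O : Finset U} (hSO : S.card < O.card) {Δ : ℝ}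
    (hΔ : ∀ v ∉ S, greedyObjective f d lam (insert v S) - greedyObjective f d lam S ≤ Δ) :
    (f (S ∪ O) - f S) / (2 * O.card)
      + S.card * (lam * dSet d O / α / (O.card * (O.card - 1))) ≤ Δ := by
  set C := O \ S
  set M := ∑ v ∈ C, (f (insert v S) - f S)
  have hp1 : (1 : ℝ) ≤ O.card := by exact_mod_cast (Nat.zero_le _).trans_lt hSO
  have hp : (0 : ℝ) < O.card := by linarith
  have hC : (0 : ℝ) < C.card := by
    have : C.Nonempty := sdiff_nonempty.2 fun h => (card_le_card h).not_gt hSO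
    exact_mod_cast this.card_pos
  have hCO : (C.card : ℝ) ≤ O.card := by exact_mod_cast card_le_card sdiff_subset
  have hgains : ∑ v ∈ C, (greedyObjective f d lam (insert v S) - greedyObjective f d lam S)
      = M / 2 + lam * dCross d C S := by
    rw [sum_congr rfl fun v hv => show greedyObjective f d lam (insert v S)
        - greedyObjective f d lam S = (f (insert v S) - f S) / 2 + lam * ∑ w ∈ S, d v w by
      rw [greedyObjective, greedyObjective, dSet_insert d hsymm hself (mem_sdiff.1 hv).2]; ring]
    rw [sum_add_distrib, ← sum_div, ← mul_sum, dCross]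
  have havg : M / 2 + lam * dCross d C S ≤ C.card * Δ := by
    rw [← hgains, ← nsmul_eq_mul]
    exact sum_le_card_nsmul _ _ _ fun v hv => hΔ v (mem_sdiff.1 hv).2
  have hfpart : C.card * ((f (S ∪ O) - f S) / (2 * O.card)) ≤ M / 2 := by
    have hM : f (S ∪ O) - f S ≤ M := by
      rw [← union_sdiff_self_eq_union]; exact sub_le_sum_marginal f hsub S C
    have hF : 0 ≤ f (S ∪ O) - f S := sub_nonneg.2 (hmono _ _ subset_union_left)
    calc C.card * ((f (S ∪ O) - f S) / (2 * O.card))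
        ≤ O.card * ((f (S ∪ O) - f S) / (2 * O.card)) :=
          mul_le_mul_of_nonneg_right hCO (by positivity)
      _ = (f (S ∪ O) - f S) / 2 := by field_simp
      _ ≤ M / 2 := by linarith
  have hdpart : C.card * (S.card * (lam * dSet d O / α / (O.card * (O.card - 1))))
      ≤ lam * dCross d C S := by
    have hkey := mul_le_mul_of_nonneg_left
      (card_sdiff_mul_card_mul_dSet_le d hα hnn hsymm hself htri hSO.le) hlam
    rw [div_div, mul_div_assoc', mul_div_assoc']
    exact div_le_of_le_mul₀ (by have := sub_nonneg.2 hp1; positivity)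
      (mul_nonneg hlam (dCross_nonneg d hnn _ _)) (by linarith)
  refine le_of_mul_le_mul_left ?_ hC
  linarith

section InsertionChain

variable [DecidableEq U] {G : ℕ → Finset U} {u : ℕ → U} {p : ℕ}

lemma card_of_insertionChain (hG0 : G 0 = ∅)
    (hstep : ∀ i < p, G (i + 1) = insert (u (i + 1)) (G i) ∧ u (i + 1) ∉ G i)
    {i : ℕ} (hi : i ≤ p) : (G i).card = i := by
  induction i with
  | zero => rw [hG0, card_empty]
  | succ i ih =>
    obtain ⟨hins, hnotin⟩ := hstep i hi
    rw [hins, card_insert_of_notMem hnotin, ih (Nat.le_of_succ_le hi)]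

lemma subset_of_insertionChain
    (hstep : ∀ i < p, G (i + 1) = insert (u (i + 1)) (G i) ∧ u (i + 1) ∉ G i)
    {i j : ℕ} (hij : i ≤ j) (hj : j ≤ p) : G i ⊆ G j := by
  induction j, hij using Nat.le_induction with
  | base => exact Subset.rfl
  | succ j _ ih => exact (ih (Nat.le_of_succ_le hj)).trans ((hstep j hj).1 ▸ subset_insert _ _)

end InsertionChain

lemma sum_range_mul_div_mul_pred (p : ℕ) {x : ℝ} (hx : p ≤ 1 → x = 0) :
    ∑ i ∈ range p, (i : ℝ) * (x / (p * (p - 1))) = x / 2 := by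
  rcases le_or_gt p 1 with hp | hp
  · simp [hx hp]
  have hgauss : ∑ i ∈ range p, (i : ℝ) = p * (p - 1) / 2 := by
    have h := congrArg (Nat.cast : ℕ → ℝ) (sum_range_id_mul_two p)
    push_cast [Nat.cast_sub hp.le] at h
    linarith
  have hp1 : (p : ℝ) - 1 ≠ 0 := sub_ne_zero.2 (by exact_mod_cast hp.ne')
  rw [← sum_mul, hgauss]
  field_simp

lemma greedyObjective_sub_ge [DecidableEq U] {d : U → U → ℝ} {α : ℝ} {f : Finset U → ℝ}
    {lam : ℝ} {p : ℕ} {G : ℕ → Finset U} {u : ℕ → U}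
    (hα : 1 ≤ α) (hnn : ∀ u v, 0 ≤ d u v) (hsymm : ∀ u v, d u v = d v u)
    (hself : ∀ u, d u u = 0) (htri : ∀ u v w, d u v ≤ α * (d v w + d w u))
    (hmono : ∀ X Y, X ⊆ Y → f X ≤ f Y) (hsub : ∀ X Y, f (X ∪ Y) + f (X ∩ Y) ≤ f X + f Y)
    (hlam : 0 ≤ lam) (hG0 : G 0 = ∅)
    (hstep : ∀ i < p, G (i + 1) = insert (u (i + 1)) (G i) ∧ u (i + 1) ∉ G i)
    (hgreedy : ∀ i < p, ∀ v ∉ G i,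
      greedyObjective f d lam (insert v (G i)) - greedyObjective f d lam (G i)
        ≤ greedyObjective f d lam (G (i + 1)) - greedyObjective f d lam (G i))
    {O : Finset U} (hO : O.card = p) (hp : 0 < p) :
    (f O - f (G p)) / 2 + lam * dSet d O / α / 2
      ≤ greedyObjective f d lam (G p) - greedyObjective f d lam (G 0) := by
  have hgain : ∀ i ∈ range p, (f O - f (G p)) / (2 * p)
      + i * (lam * dSet d O / α / (p * (p - 1)))
        ≤ greedyObjective f d lam (G (i + 1)) - greedyObjective f d lam (G i) := by
    intro i hi
    rw [mem_range] at hi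
    have hcard := card_of_insertionChain hG0 hstep hi.le
    refine le_trans ?_ (greedy_gain_ge hα hnn hsymm hself htri hmono hsub hlam (O := O)
      (by rw [hcard, hO]; exact hi) (hgreedy i hi))
    rw [hcard, hO]
    have := hmono _ _ (subset_union_right : O ⊆ G i ∪ O)
    have := hmono _ _ (subset_of_insertionChain hstep hi.le le_rfl)
    gcongr
  have hdO : p ≤ 1 → lam * dSet d O / α = 0 := fun hp1 => by
    rw [dSet_eq_zero_of_card_le_one d hself (hO ▸ hp1), mul_zero, zero_div]
  have hp' : (p : ℝ) ≠ 0 := by exact_mod_cast hp.ne'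
  have hsum := sum_le_sum hgain
  rw [sum_range_sub (fun i => greedyObjective f d lam (G i)), sum_add_distrib, sum_const,
    card_range, nsmul_eq_mul, sum_range_mul_div_mul_pred p hdO,
    show (p : ℝ) * ((f O - f (G p)) / (2 * p)) = (f O - f (G p)) / 2 by field_simp] at hsum
  exact hsum

end

theorem stmt13 {U : Type*} [DecidableEq U] (d : U → U → ℝ) (α : ℝ) (hα : 1 ≤ α)
    (hnn : ∀ u v, 0 ≤ d u v) (hsymm : ∀ u v, d u v = d v u)
    (hself : ∀ u, d u u = 0)
    (htri : ∀ u v w, d u v ≤ α * (d v w + d w u))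
    (f : Finset U → ℝ) (hfnn : ∀ X, 0 ≤ f X) (hf0 : f ∅ = 0)
    (hmono : ∀ X Y, X ⊆ Y → f X ≤ f Y)
    (hsub : ∀ X Y, f (X ∪ Y) + f (X ∩ Y) ≤ f X + f Y)
    (lam : ℝ) (hlam : 0 ≤ lam) (p : ℕ)
    (G : ℕ → Finset U) (u : ℕ → U) (hG0 : G 0 = ∅)
    (hstep : ∀ i < p, G (i + 1) = insert (u (i + 1)) (G i) ∧ u (i + 1) ∉ G i)
    (hgreedy : ∀ i < p, ∀ v ∉ G i,
      ((1 / 2) * f (insert (u (i + 1)) (G i)) + lam * dSet d (insert (u (i + 1)) (G i)))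
          - ((1 / 2) * f (G i) + lam * dSet d (G i))
        ≥ ((1 / 2) * f (insert v (G i)) + lam * dSet d (insert v (G i)))
          - ((1 / 2) * f (G i) + lam * dSet d (G i)))
    (O : Finset U) (hO : O.card = p) :
    f (G p) + lam * dSet d (G p) ≥ (1 / (2 * α)) * (f O + lam * dSet d O) := by
  rcases Nat.eq_zero_or_pos p with rfl | hp
  · rw [card_eq_zero.1 hO, hG0, hf0, dSet_empty]; norm_num
  have h := greedyObjective_sub_ge hα hnn hsymm hself htri hmono hsub hlam hG0 hstep
    (fun i hi v hv => by rw [(hstep i hi).1]; exact hgreedy i hi v hv) hO hp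
  simp only [greedyObjective, hG0, hf0, dSet_empty] at h
  have hfO : f O / (2 * α) ≤ f O / 2 := div_le_div_of_nonneg_left (hfnn O) two_pos (by linarith)
  rw [ge_iff_le, show 1 / (2 * α) * (f O + lam * dSet d O)
    = f O / (2 * α) + lam * dSet d O / α / 2 by ring]
  linarith
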